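/- Let 0 < λ < μ and √(λμ) < λ₀ < μ, and let α satisfy 0 ≤ α < λ + μ − λ₀ − λμ/λ₀. Then (λ₀/μ) · G₋(α) < 1, where G₋(α) = (λ + μ − α − √((λ + μ − α)² − 4λμ)) / (2λ). -/

import Mathlib

/-!
`G₋(α)` is the smaller root of `q(x) = λx² − (λ + μ − α)x + μ`, and
`q(μ/λ₀) = (μ/λ₀)(λ₀ + λμ/λ₀ − (λ + μ − α)) < 0` by the bound on `α`. So `μ/λ₀` lies strictly
between the two roots of `q`, and in particular `G₋(α) < μ/λ₀`.
-/

theorem sub_sqrt_discrim_div_lt_of_quadratic_neg {a b c x : ℝ} (ha : 0 < a)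
    (hx : a * x ^ 2 - b * x + c < 0) :
    (b - Real.sqrt (b ^ 2 - 4 * a * c)) / (2 * a) < x := by
  -- `4a (a x² − b x + c) = (b − 2ax)² − (b² − 4ac)`
  have hsq : (b - 2 * a * x) ^ 2 < b ^ 2 - 4 * a * c := by nlinarith
  have habs : |b - 2 * a * x| < Real.sqrt (b ^ 2 - 4 * a * c) := by
    rw [← Real.sqrt_sq_eq_abs]
    exact Real.sqrt_lt_sqrt (sq_nonneg _) hsq
  rw [div_lt_iff₀ (by positivity)]
  linarith [le_abs_self (b - 2 * a * x)]

theorem mm1_case2_strict_general (lam mu lam0 alpha : ℝ) (hlam : 0 < lam) (hmu : lam < mu)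
    (hlam0l : Real.sqrt (lam * mu) < lam0)
    (halpha : alpha < lam + mu - lam0 - lam * mu / lam0) :
    (lam0 / mu) *
      ((lam + mu - alpha - Real.sqrt ((lam + mu - alpha) ^ 2 - 4 * lam * mu)) / (2 * lam))
      < 1 := by
  have hmu0 : 0 < mu := hlam.trans hmu
  have hlam0 : 0 < lam0 := (Real.sqrt_nonneg _).trans_lt hlam0l
  have hroot : (lam + mu - alpha - Real.sqrt ((lam + mu - alpha) ^ 2 - 4 * lam * mu)) /
      (2 * lam) < mu / lam0 := by
    apply sub_sqrt_discrim_div_lt_of_quadratic_neg hlam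
    have hq : lam * (mu / lam0) ^ 2 - (lam + mu - alpha) * (mu / lam0) + mu =
        mu / lam0 * (lam0 + lam * mu / lam0 - (lam + mu - alpha)) := by
      field_simp
      ring
    rw [hq]
    exact mul_neg_of_pos_of_neg (by positivity) (by linarith)
  calc lam0 / mu * ((lam + mu - alpha -
          Real.sqrt ((lam + mu - alpha) ^ 2 - 4 * lam * mu)) / (2 * lam))
      < lam0 / mu * (mu / lam0) := mul_lt_mul_of_pos_left hroot (by positivity)
    _ = 1 := by field_simp

/-- For `√(λμ) < λ₀ < μ` and `0 ≤ α < λ + μ − λ₀ − λμ/λ₀`, one has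
`(λ₀/μ)·G₋(α) < 1`, where `G₋(α) = (λ + μ − α − √((λ + μ − α)² − 4λμ)) / (2λ)`. -/
theorem mm1_case2_strict (lam mu lam0 alpha : ℝ) (hlam : 0 < lam) (hmu : lam < mu)
    (hlam0l : Real.sqrt (lam * mu) < lam0) (hlam0u : lam0 < mu)
    (halpha0 : 0 ≤ alpha) (halpha : alpha < lam + mu - lam0 - lam * mu / lam0) :
    (lam0 / mu) *
      ((lam + mu - alpha - Real.sqrt ((lam + mu - alpha) ^ 2 - 4 * lam * mu)) / (2 * lam))
      < 1 :=
  mm1_case2_strict_general lam mu lam0 alpha hlam hmu hlam0l halpha
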